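/- Let M > 0 and S = {λ ∈ ℂ : |Re λ| ≤ M and |Im λ| ≤ M}. Let θ : C(S, ℂ) → ℂ be additive, conjugate-homogeneous (θ(c • f) = conj(c)·θ(f) for c ∈ ℂ), and satisfy |θ(f)| ≤ K·‖f‖ for all f ∈ C(S, ℂ), where K ≥ 0 and ‖·‖ is the sup norm. Let f₀, …, f_{m−1} ∈ C(S, ℂ) satisfy ‖f_i‖ ≤ 1 for all i, and have pairwise disjoint supports: for all i ≠ j and all x ∈ S, if f_i(x) ≠ 0 then f_j(x) = 0. Then Σ_{i < m} |θ(f_i)| ≤ K. -/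

import Mathlib

def Sq (M : ℝ) : Set ℂ := {z : ℂ | |z.re| ≤ M ∧ |z.im| ≤ M}

theorem isCompact_Sq (M : ℝ) : IsCompact (Sq M) := by
  apply Metric.isCompact_of_isClosed_isBounded
  · exact (isClosed_le (Complex.continuous_re.abs) continuous_const).inter
      (isClosed_le (Complex.continuous_im.abs) continuous_const)
  · apply (Metric.isBounded_closedBall (x := (0 : ℂ)) (r := M + M)).subset
    intro z hz
    simp only [Metric.mem_closedBall, dist_zero_right]
    calc ‖z‖ ≤ |z.re| + |z.im| := Complex.norm_le_abs_re_add_abs_im z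
      _ ≤ M + M := add_le_add hz.1 hz.2

instance (M : ℝ) : CompactSpace (Sq M) := isCompact_iff_compactSpace.mp (isCompact_Sq M)

/-!
Choose unimodular phases `c i` with `conj (c i) * θ (f i) = ‖θ (f i)‖`. Since `θ` is conjugate
linear, `∑ ‖θ (f i)‖ = θ (∑ c i • f i)`, and since the `f i` have disjoint supports the function
`∑ c i • f i` agrees at every point with a single `c i • f i`, so its sup norm is at most `1`.
-/

open Finset

section ConjLinear

variable {𝕜 E ι : Type*} [RCLike 𝕜] [AddCommGroup E] [Module 𝕜 E] [Norm E] [Fintype ι]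

theorem sum_norm_le_of_conjLinear (θ : E → 𝕜) (hadd : ∀ f g, θ (f + g) = θ f + θ g)
    (hsmul : ∀ (c : 𝕜) (f), θ (c • f) = starRingEnd 𝕜 c * θ f)
    {K : ℝ} (hK : 0 ≤ K) (hbound : ∀ f, ‖θ f‖ ≤ K * ‖f‖) (f : ι → E)
    (hcomb : ∀ c : ι → 𝕜, (∀ i, ‖c i‖ = 1) → ‖∑ i, c i • f i‖ ≤ 1) :
    ∑ i, ‖θ (f i)‖ ≤ K := by
  have hphase : ∀ i, ∃ c : 𝕜, ‖c‖ = 1 ∧ starRingEnd 𝕜 c * θ (f i) = ‖θ (f i)‖ := fun i => by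
    obtain ⟨c, hc, hcθ⟩ := RCLike.exists_norm_eq_mul_self (θ (f i))
    exact ⟨starRingEnd 𝕜 c, by rwa [RCLike.norm_conj], by rw [RCLike.conj_conj, hcθ]⟩
  choose c hc1 hcθ using hphase
  have hθsum : θ (∑ i, c i • f i) = ((∑ i, ‖θ (f i)‖ : ℝ) : 𝕜) := by
    rw [show θ (∑ i, c i • f i) = ∑ i, θ (c i • f i) from map_sum (AddMonoidHom.mk' θ hadd) _ _,
      RCLike.ofReal_sum]
    exact sum_congr rfl fun i _ => by rw [hsmul, hcθ]
  calc ∑ i, ‖θ (f i)‖ = ‖θ (∑ i, c i • f i)‖ := by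
        rw [hθsum, RCLike.norm_ofReal, abs_of_nonneg (sum_nonneg fun i _ => norm_nonneg _)]
    _ ≤ K * ‖∑ i, c i • f i‖ := hbound _
    _ ≤ K := mul_le_of_le_one_right hK (hcomb c hc1)

end ConjLinear

theorem norm_sum_le_of_pairwise_ne_zero {E ι : Type*} [SeminormedAddCommGroup E] [Fintype ι]
    (g : ι → E) (hg : Pairwise fun i j => g i ≠ 0 → g j = 0) {r : ℝ} (hr : 0 ≤ r)
    (hle : ∀ i, ‖g i‖ ≤ r) : ‖∑ i, g i‖ ≤ r := by
  by_cases h : ∃ i, g i ≠ 0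
  · obtain ⟨i, hi⟩ := h
    rw [sum_eq_single_of_mem i (mem_univ i) fun j _ hji => hg hji.symm hi]
    exact hle i
  · simp only [not_exists, not_not] at h
    simpa [h] using hr

theorem ContinuousMap.norm_sum_smul_le_one_of_disjoint {X 𝕜 ι : Type*} [TopologicalSpace X]
    [CompactSpace X] [RCLike 𝕜] [Fintype ι] (f : ι → C(X, 𝕜)) (hf1 : ∀ i, ‖f i‖ ≤ 1)
    (hdisj : Pairwise fun i j => ∀ x, f i x ≠ 0 → f j x = 0) (c : ι → 𝕜)
    (hc1 : ∀ i, ‖c i‖ = 1) : ‖∑ i, c i • f i‖ ≤ 1 := by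
  refine (ContinuousMap.norm_le _ zero_le_one).mpr fun x => ?_
  rw [ContinuousMap.sum_apply]
  refine norm_sum_le_of_pairwise_ne_zero _ (fun i j hij hi => ?_) zero_le_one fun i => ?_
  · simp only [ContinuousMap.smul_apply, smul_eq_mul, ne_eq, mul_eq_zero, not_or] at hi ⊢
    exact Or.inr (hdisj hij x hi.2)
  · rw [ContinuousMap.smul_apply, norm_smul, hc1, one_mul]
    exact (ContinuousMap.norm_coe_le_norm _ x).trans (hf1 i)

theorem stmt15
    (M : ℝ)
    (θ : C(Sq M, ℂ) → ℂ)
    (hadd : ∀ f g, θ (f + g) = θ f + θ g)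
    (hsmul : ∀ (c : ℂ) (f), θ (c • f) = (starRingEnd ℂ) c * θ f)
    (K : ℝ) (hK : 0 ≤ K)
    (hbound : ∀ f, ‖θ f‖ ≤ K * ‖f‖)
    (m : ℕ) (f : Fin m → C(Sq M, ℂ))
    (hf1 : ∀ i, ‖f i‖ ≤ 1)
    (hdisj : ∀ i j, i ≠ j → ∀ x : Sq M, f i x ≠ 0 → f j x = 0) :
    ∑ i : Fin m, ‖θ (f i)‖ ≤ K :=
  sum_norm_le_of_conjLinear θ hadd hsmul hK hbound f
    (ContinuousMap.norm_sum_smul_le_one_of_disjoint f hf1 fun i j => hdisj i j)
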